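/- The number of equivalence classes of binary LCD [n,1] codes equals n/2 if n is even and (n+1)/2 if n is odd. -/

import Mathlib

open Matrix Finset

def dualCode {F : Type*} [Field F] {n : ℕ} (C : Submodule F (Fin n → F)) :
    Submodule F (Fin n → F) where
  carrier := {x | ∀ y ∈ C, ∑ i, x i * y i = 0}
  zero_mem' := by intro y hy; simp
  add_mem' := by
    intro a b ha hb y hy
    have h1 := ha y hy; have h2 := hb y hy
    simp [add_mul, Finset.sum_add_distrib, h1, h2]
  smul_mem' := by
    intro c a ha y hy
    have h1 := ha y hy
    simp [smul_eq_mul, mul_assoc, ← Finset.mul_sum, h1]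

def IsLCD {F : Type*} [Field F] {n : ℕ} (C : Submodule F (Fin n → F)) : Prop :=
  C ⊓ dualCode C = ⊥

open Classical in
noncomputable def wt {F : Type*} [Field F] {n : ℕ} (x : Fin n → F) : ℕ :=
  (Finset.univ.filter fun i => x i ≠ 0).card

def monoMap {F : Type*} [Field F] {n : ℕ} (σ : Equiv.Perm (Fin n)) (c : Fin n → F) :
    (Fin n → F) →ₗ[F] (Fin n → F) where
  toFun x := fun j => c j * x (σ j)
  map_add' := by intro a b; funext j; simp [mul_add]
  map_smul' := by intro r a; funext j; simp [smul_eq_mul]; ring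

def CodeEquiv {F : Type*} [Field F] {n : ℕ} (C C' : Submodule F (Fin n → F)) : Prop :=
  ∃ (σ : Equiv.Perm (Fin n)) (c : Fin n → F), (∀ i, c i ≠ 0) ∧ C' = C.map (monoMap σ c)

def extendZero (F : Type*) [Field F] (n : ℕ) : (Fin n → F) →ₗ[F] (Fin (n+1) → F) where
  toFun x := Fin.snoc x 0
  map_add' := by intro a b; funext j; refine Fin.lastCases ?_ ?_ j <;> simp
  map_smul' := by intro r a; funext j; refine Fin.lastCases ?_ ?_ j <;> simp

def hasMinWeight {F : Type*} [Field F] {n : ℕ} (C : Submodule F (Fin n → F)) (d : ℕ) : Prop :=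
  (∃ x ∈ C, x ≠ 0 ∧ wt x = d) ∧ ∀ x ∈ C, x ≠ 0 → d ≤ wt x

/-! A one-dimensional binary code is spanned by its unique nonzero word `x`, and it is LCD exactly
when `x ⬝ᵥ x`, which over `ZMod 2` is `wt x` reduced mod 2, is nonzero. The only nonzero scalar
of `ZMod 2` is `1`, so monomial equivalence is plain permutation of coordinates; it preserves the
weight and moves any word to any other word of the same weight. The equivalence classes therefore
correspond to the odd weights `1, 3, …` up to `n`, and there are `(n + 1) / 2` of them. -/

open Submodule

section Field
variable {F : Type*} [Field F] {n : ℕ}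

theorem mem_dualCode {C : Submodule F (Fin n → F)} {x : Fin n → F} :
    x ∈ dualCode C ↔ ∀ y ∈ C, x ⬝ᵥ y = 0 :=
  Iff.rfl

theorem isLCD_span_singleton_iff {x : Fin n → F} (hx : x ≠ 0) :
    IsLCD (span F {x}) ↔ x ⬝ᵥ x ≠ 0 := by
  have hdual : ∀ a : F, a • x ∈ dualCode (span F {x}) ↔ a * (x ⬝ᵥ x) = 0 := by
    intro a
    simp only [mem_dualCode, mem_span_singleton, forall_exists_index, forall_apply_eq_imp_iff,
      smul_dotProduct, dotProduct_smul, smul_eq_mul]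
    exact ⟨fun h => by simpa using h 1, fun h b => by rw [mul_left_comm, h, mul_zero]⟩
  constructor
  · intro h hxx
    have hx_mem : x ∈ span F {x} ⊓ dualCode (span F {x}) :=
      ⟨mem_span_singleton_self x, by simpa using (hdual 1).mpr (by simp [hxx])⟩
    rw [h] at hx_mem
    exact hx hx_mem
  · intro hxx
    rw [IsLCD, eq_bot_iff]
    rintro y ⟨hy, hy_dual⟩
    obtain ⟨a, rfl⟩ := mem_span_singleton.mp hy
    have ha : a = 0 := (mul_eq_zero.mp ((hdual a).mp hy_dual)).resolve_right hxx
    simp [ha]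

theorem wt_eq_natCard (x : Fin n → F) : wt x = Nat.card {i // x i ≠ 0} := by
  classical
  rw [wt, Nat.card_eq_fintype_card, Fintype.card_subtype]

theorem wt_le (x : Fin n → F) : wt x ≤ n := by
  rw [wt_eq_natCard]
  exact (Finite.card_subtype_le _).trans_eq (Nat.card_fin n)

theorem wt_comp_perm (x : Fin n → F) (σ : Equiv.Perm (Fin n)) : wt (x ∘ σ) = wt x := by
  simp only [wt_eq_natCard]
  exact Nat.card_congr (σ.subtypeEquiv fun _ => Iff.rfl)

theorem exists_wt_eq {w : ℕ} (hw : w ≤ n) : ∃ x : Fin n → F, wt x = w := by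
  classical
  obtain ⟨s, -, hs⟩ :=
    exists_subset_card_eq (s := (univ : Finset (Fin n))) (n := w) (by simpa using hw)
  refine ⟨fun i => if i ∈ s then 1 else 0, ?_⟩
  simp [wt, ← hs]

theorem exists_eq_span_singleton {C : Submodule F (Fin n → F)} (hC : Module.finrank F C = 1) :
    ∃ x, x ≠ 0 ∧ C = span F {x} := by
  obtain ⟨x, hx, hx0⟩ := exists_mem_ne_zero_of_ne_bot (p := C) (by rintro rfl; simp at hC)
  exact ⟨x, hx0, eq_span_singleton_of_mem_of_finrank_eq_one hC hx hx0⟩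

end Field

section Binary
variable {n : ℕ}

theorem ZMod.two_mul_self_eq_ite (a : ZMod 2) : a * a = if a ≠ 0 then 1 else 0 := by
  revert a; decide

theorem ZMod.two_eq_of_ne_zero_iff {a b : ZMod 2} (h : a ≠ 0 ↔ b ≠ 0) : a = b := by
  revert a b; decide

theorem dotProduct_self_eq_wt (x : Fin n → ZMod 2) : x ⬝ᵥ x = wt x := by
  classical
  simp only [dotProduct, ZMod.two_mul_self_eq_ite, sum_boole, wt]
  congr

theorem isLCD_span_singleton_iff_odd {x : Fin n → ZMod 2} (hx : x ≠ 0) :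
    IsLCD (span (ZMod 2) {x}) ↔ Odd (wt x) := by
  rw [isLCD_span_singleton_iff hx, dotProduct_self_eq_wt, Ne, ZMod.natCast_eq_zero_iff_even,
    Nat.not_even_iff_odd]

theorem eq_of_mem_span_singleton {x y : Fin n → ZMod 2} (hy : y ∈ span (ZMod 2) {x})
    (hy0 : y ≠ 0) : y = x := by
  obtain ⟨a, rfl⟩ := mem_span_singleton.mp hy
  obtain rfl : a = 1 := ZMod.two_eq_of_ne_zero_iff (by simpa using left_ne_zero_of_smul hy0)
  exact one_smul _ _

theorem monoMap_eq_comp (σ : Equiv.Perm (Fin n)) {c : Fin n → ZMod 2} (hc : ∀ i, c i ≠ 0)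
    (x : Fin n → ZMod 2) : monoMap σ c x = x ∘ σ := by
  funext j
  show c j * x (σ j) = x (σ j)
  rw [ZMod.two_eq_of_ne_zero_iff (a := c j) (b := 1) (by simpa using hc j), one_mul]

theorem exists_comp_perm_eq_of_wt_eq {x y : Fin n → ZMod 2} (h : wt x = wt y) :
    ∃ σ : Equiv.Perm (Fin n), x ∘ σ = y := by
  classical
  let e : {j // y j ≠ 0} ≃ {j // x j ≠ 0} :=
    (Finite.card_eq.mp (by rw [← wt_eq_natCard, ← wt_eq_natCard, h])).some
  refine ⟨e.extendSubtype, funext fun j => ZMod.two_eq_of_ne_zero_iff ?_⟩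
  by_cases hj : y j ≠ 0
  · exact iff_of_true (e.extendSubtype_mem j hj) hj
  · exact iff_of_false (e.extendSubtype_not_mem j hj) hj

theorem codeEquiv_span_singleton_iff {x y : Fin n → ZMod 2} (hy : y ≠ 0) :
    CodeEquiv (span (ZMod 2) {x}) (span (ZMod 2) {y}) ↔ wt x = wt y := by
  constructor
  · rintro ⟨σ, c, hc, hxy⟩
    rw [map_span, Set.image_singleton, monoMap_eq_comp σ hc] at hxy
    rw [eq_of_mem_span_singleton (hxy ▸ mem_span_singleton_self y) hy, wt_comp_perm]
  · intro h
    obtain ⟨σ, rfl⟩ := exists_comp_perm_eq_of_wt_eq h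
    refine ⟨σ, 1, fun _ => one_ne_zero, ?_⟩
    rw [map_span, Set.image_singleton, monoMap_eq_comp σ (c := 1) fun _ => one_ne_zero]

end Binary

abbrev BinaryLCDLine (n : ℕ) : Type :=
  {C : Submodule (ZMod 2) (Fin n → ZMod 2) // Module.finrank (ZMod 2) C = 1 ∧ IsLCD C}

namespace BinaryLCDLine
variable {n : ℕ}

noncomputable def weight (C : BinaryLCDLine n) : ℕ :=
  wt (exists_eq_span_singleton C.2.1).choose

theorem weight_eq {C : BinaryLCDLine n} {x : Fin n → ZMod 2}
    (hC : C.1 = span (ZMod 2) {x}) : C.weight = wt x := by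
  obtain ⟨hy, hCy⟩ := (exists_eq_span_singleton C.2.1).choose_spec
  rw [weight, eq_of_mem_span_singleton (hC.le (hCy.ge (mem_span_singleton_self _))) hy]

theorem codeEquiv_iff_weight_eq (C C' : BinaryLCDLine n) :
    CodeEquiv C.1 C'.1 ↔ C.weight = C'.weight := by
  obtain ⟨x, -, hC⟩ := exists_eq_span_singleton C.2.1
  obtain ⟨y, hy, hC'⟩ := exists_eq_span_singleton C'.2.1
  rw [weight_eq hC, weight_eq hC', hC, hC', codeEquiv_span_singleton_iff hy]

theorem range_weight : Set.range (weight (n := n)) = ↑{w ∈ range (n + 1) | Odd w} := by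
  ext w
  simp only [Set.mem_range, coe_filter, mem_range, Set.mem_ofPred_eq, Nat.lt_succ_iff]
  constructor
  · rintro ⟨C, rfl⟩
    obtain ⟨x, hx, hC⟩ := exists_eq_span_singleton C.2.1
    rw [weight_eq hC]
    exact ⟨wt_le x, (isLCD_span_singleton_iff_odd hx).mp (hC ▸ C.2.2)⟩
  · rintro ⟨hw, hodd⟩
    obtain ⟨x, rfl⟩ := exists_wt_eq (F := ZMod 2) hw
    have hx : x ≠ 0 := by
      rintro rfl
      simp [wt] at hodd
    exact ⟨⟨span _ {x}, finrank_span_singleton hx, (isLCD_span_singleton_iff_odd hx).mpr hodd⟩,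
      weight_eq rfl⟩

end BinaryLCDLine

theorem card_filter_odd_range (n : ℕ) : #{w ∈ range (n + 1) | Odd w} = (n + 1) / 2 := by
  induction n with
  | zero => decide
  | succ m ih =>
    rw [range_add_one, filter_insert]
    split_ifs with h
    · rw [card_insert_of_notMem (by simp), ih]
      have := Nat.odd_iff.mp h
      omega
    · rw [ih]
      have := Nat.even_iff.mp (Nat.not_odd_iff_even.mp h)
      omega

theorem natCard_quot_codeEquiv (n : ℕ) :
    Nat.card (Quot fun C C' : BinaryLCDLine n => CodeEquiv C.1 C'.1) = (n + 1) / 2 :=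
  calc Nat.card (Quot fun C C' : BinaryLCDLine n => CodeEquiv C.1 C'.1)
      = Nat.card (Set.range (BinaryLCDLine.weight (n := n))) :=
        Nat.card_congr <| (Quot.congrRight BinaryLCDLine.codeEquiv_iff_weight_eq).trans
          (Setoid.quotientKerEquivRange _)
    _ = (n + 1) / 2 := by
        rw [BinaryLCDLine.range_weight, Nat.card_coe_set_eq, Set.ncard_coe_finset,
          card_filter_odd_range]

theorem stmt9 (n : ℕ) :
    Nat.card (Quot fun (C C' : {C : Submodule (ZMod 2) (Fin n → ZMod 2) //
        Module.finrank (ZMod 2) C = 1 ∧ IsLCD C}) => CodeEquiv C.1 C'.1) =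
      if Even n then n / 2 else (n + 1) / 2 := by
  rw [natCard_quot_codeEquiv]
  split_ifs with h
  · obtain ⟨k, rfl⟩ := h
    omega
  · rfl
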